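/- (The Hamiltonian flow of a 2-homogeneous Hamiltonian preserves the Liouville form.) Let n ≥ 1, let H be as in the context, and let φ : ℝ × (ℂⁿ \ {0}) → ℂⁿ \ {0} be the flow of the vector field z ↦ i • ∇H(z) as in the context. Then for every t ∈ ℝ, every z ∈ ℂⁿ \ {0} and every v ∈ ℂⁿ: λ_{φ(t,z)}((D_z φ(t, ·))(v)) = λ_z(v), where D_z φ(t, ·) is the Fréchet derivative of the time-t flow map at z; moreover H(φ(t,z)) = H(z) for all t and z. -/

import Mathlib

open Complex
open scoped ContDiff

set_option maxHeartbeats 1000000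

noncomputable section

/-- `ℂⁿ`, identified with `EuclideanSpace ℂ (Fin n)`. -/
abbrev Cn (n : ℕ) : Type := EuclideanSpace ℂ (Fin n)

/-- The standard symplectic form `ω₀(v,w) = Im ⟪v,w⟫`. -/
def omega0 {n : ℕ} (v w : Cn n) : ℝ := (inner ℂ v w : ℂ).im

/-- The Liouville one-form `λ_z(v) = (1/2) Im ⟪z,v⟫`. -/
def liouville {n : ℕ} (z v : Cn n) : ℝ := (1 / 2) * (inner ℂ z v : ℂ).im

/-- `g` is the gradient of `H` at `z` with respect to the real inner product `Re ⟪·,·⟫`. -/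
def IsGradientAt {n : ℕ} (H : Cn n → ℝ) (g z : Cn n) : Prop :=
  HasFDerivAt H (Complex.reCLM.comp (((innerSL ℂ) g).restrictScalars ℝ)) z

/-- `φ` is the (smooth) flow of the vector field `z ↦ i • ∇H(z)` on `ℂⁿ \ {0}`:
`φ(0,z) = z` and `∂_t φ(t,z) = i • ∇H(φ(t,z))`. -/
def IsReebFlow {n : ℕ} (gradH : Cn n → Cn n) (φ : ℝ → Cn n → Cn n) : Prop :=
  (∀ z : Cn n, z ≠ 0 → φ 0 z = z) ∧
  (∀ (t : ℝ) (z : Cn n), z ≠ 0 → φ t z ≠ 0) ∧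
  (∀ (t : ℝ) (z : Cn n), z ≠ 0 →
    HasDerivAt (fun s => φ s z) (Complex.I • gradH (φ t z)) t) ∧
  ContDiffOn ℝ (⊤ : ℕ∞) (fun q : ℝ × Cn n => φ q.1 q.2) (Set.univ ×ˢ {(0 : Cn n)}ᶜ)

/-! ### Auxiliary material -/

/-- The map sending `g` to the real-linear functional `v ↦ Re ⟪g, v⟫`, as an `ℝ`-linear map. -/
def Tlin (n : ℕ) : Cn n →ₗ[ℝ] (Cn n →L[ℝ] ℝ) where
  toFun g := Complex.reCLM.comp (((innerSL ℂ) g).restrictScalars ℝ)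
  map_add' g₁ g₂ := by
    ext v
    simp [inner_add_left]
  map_smul' c g := by
    ext v
    simp only [ContinuousLinearMap.coe_comp', Function.comp_apply,
      ContinuousLinearMap.coe_restrictScalars', innerSL_apply_apply, Complex.reCLM_apply,
      RingHom.id_apply, ContinuousLinearMap.coe_smul', Pi.smul_apply, smul_eq_mul]
    rw [← algebraMap_smul ℂ c g, Complex.coe_algebraMap, inner_smul_left, Complex.conj_ofReal]
    simp [Complex.mul_re]

lemma Tlin_apply {n : ℕ} (g v : Cn n) : Tlin n g v = (inner ℂ g v : ℂ).re := rfl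

lemma Tlin_inj (n : ℕ) : Function.Injective (Tlin n) := by
  intro g₁ g₂ h
  have h0 : Tlin n (g₁ - g₂) = 0 := by rw [map_sub, h, sub_self]
  have h1 : (inner ℂ (g₁ - g₂) (g₁ - g₂) : ℂ).re = 0 := by
    have := ContinuousLinearMap.ext_iff.mp h0 (g₁ - g₂)
    simpa only [Tlin_apply, ContinuousLinearMap.zero_apply] using this
  have h2 : ‖g₁ - g₂‖ ^ 2 = 0 := by
    rw [← inner_self_eq_norm_sq (𝕜 := ℂ) (g₁ - g₂), RCLike.re_to_complex]
    exact h1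
  have h3 : g₁ - g₂ = 0 := by
    have hnorm : ‖g₁ - g₂‖ = 0 := by nlinarith [norm_nonneg (g₁ - g₂)]
    exact norm_eq_zero.mp hnorm
  exact sub_eq_zero.mp h3

lemma finrank_aux (n : ℕ) : Module.finrank ℝ (Cn n) = Module.finrank ℝ (Cn n →L[ℝ] ℝ) := by
  have h : Module.finrank ℝ (Cn n →L[ℝ] ℝ) = Module.finrank ℝ (Cn n) := by
    rw [← LinearMap.toContinuousLinearMap.finrank_eq]
    exact Module.finrank_linearMap_self ℝ ℝ (Cn n)
  exact h.symm

/-- The Riesz-type identification `g ↦ Re ⟪g, ·⟫` as a continuous linear equivalence. -/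
def Tequiv (n : ℕ) : Cn n ≃L[ℝ] (Cn n →L[ℝ] ℝ) :=
  ((Tlin n).linearEquivOfInjective (Tlin_inj n) (finrank_aux n)).toContinuousLinearEquiv

lemma Tequiv_apply {n : ℕ} (g : Cn n) : Tequiv n g = Tlin n g := rfl

/-- **The Hamiltonian flow of a positively `2`-homogeneous Hamiltonian preserves the
Liouville form** (and the Hamiltonian itself): for every `t`, `z ≠ 0` and `v`,
`λ_{φ(t,z)}(D_z φ(t,·)(v)) = λ_z(v)`, and `H(φ(t,z)) = H(z)`. -/
theorem flow_preserves_liouville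
    (n : ℕ) (hn : 1 ≤ n)
    (H : Cn n → ℝ) (gradH : Cn n → Cn n)
    (hH_smooth : ContDiffOn ℝ (⊤ : ℕ∞) H {(0 : Cn n)}ᶜ)
    (hH_pos : ∀ z : Cn n, z ≠ 0 → 0 < H z)
    (hH_hom : ∀ r : ℝ, 0 < r → ∀ z : Cn n, H (r • z) = r ^ 2 * H z)
    (hgrad : ∀ z : Cn n, z ≠ 0 → IsGradientAt H (gradH z) z)
    (φ : ℝ → Cn n → Cn n) (hφ : IsReebFlow gradH φ) :
    ∀ (t : ℝ) (z : Cn n), z ≠ 0 →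
      (∀ v : Cn n, liouville (φ t z) (fderiv ℝ (fun w => φ t w) z v) = liouville z v) ∧
      H (φ t z) = H z := by
  obtain ⟨hφ0, hφne, hφode, hφsm⟩ := hφ
  have hS : IsOpen ({(0 : Cn n)}ᶜ : Set (Cn n)) := isOpen_compl_singleton
  set Φ : ℝ × Cn n → Cn n := fun q => φ q.1 q.2 with hΦ_def
  set U : Set (ℝ × Cn n) := Set.univ ×ˢ {(0 : Cn n)}ᶜ with hU_def
  have hU : IsOpen U := isOpen_univ.prod hS
  have hmemU : ∀ (t : ℝ) (z : Cn n), z ≠ 0 → (t, z) ∈ U := fun t z hz =>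
    Set.mem_prod.mpr ⟨Set.mem_univ _, hz⟩
  -- gradient facts
  have hgrad' : ∀ w : Cn n, w ≠ 0 → HasFDerivAt H (Tequiv n (gradH w)) w :=
    fun w hw => hgrad w hw
  have hfderivH : ∀ w : Cn n, w ≠ 0 → fderiv ℝ H w = Tequiv n (gradH w) :=
    fun w hw => (hgrad' w hw).fderiv
  have hgdiff : ∀ w : Cn n, w ≠ 0 → DifferentiableAt ℝ gradH w := by
    intro w hw
    have h1 : ContDiffAt ℝ (⊤ : ℕ∞) H w := hH_smooth.contDiffAt (hS.mem_nhds hw)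
    have h2 : ContDiffAt ℝ 1 (fderiv ℝ H) w := h1.fderiv_right (m := 1) (by exact WithTop.coe_le_coe.mpr le_top)
    have h3 : DifferentiableAt ℝ (fun y => (Tequiv n).symm (fderiv ℝ H y)) w :=
      ((Tequiv n).symm.differentiableAt).comp w (h2.differentiableAt one_ne_zero)
    have h4 : (fun y => (Tequiv n).symm (fderiv ℝ H y)) =ᶠ[nhds w] gradH := by
      filter_upwards [hS.mem_nhds hw] with y hy
      rw [hfderivH y hy, ContinuousLinearEquiv.symm_apply_apply]
    exact h4.differentiableAt_iff.mp h3
  -- homogeneity of the gradient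
  have hg_hom : ∀ r : ℝ, 0 < r → ∀ w : Cn n, w ≠ 0 → gradH (r • w) = r • gradH w := by
    intro r hr w hw
    have hrw : r • w ≠ 0 := smul_ne_zero (ne_of_gt hr) hw
    have hsm : HasFDerivAt (fun y : Cn n => r • y) (r • ContinuousLinearMap.id ℝ (Cn n)) w :=
      (hasFDerivAt_id w).const_smul r
    have h1 : HasFDerivAt (fun y : Cn n => H (r • y))
        ((Tequiv n (gradH (r • w))).comp (r • ContinuousLinearMap.id ℝ (Cn n))) w :=
      (hgrad' (r • w) hrw).comp w hsm
    have h2 : HasFDerivAt (fun y : Cn n => H (r • y))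
        (r ^ 2 • (Tequiv n (gradH w) : Cn n →L[ℝ] ℝ)) w := by
      have heq : (fun y : Cn n => H (r • y)) = fun y => r ^ 2 • H y := by
        funext y; simpa [smul_eq_mul] using hH_hom r hr y
      rw [heq]
      exact (hgrad' w hw).const_smul (r ^ 2)
    have h3 := h1.unique h2
    apply Tlin_inj n
    ext u
    have h5 := ContinuousLinearMap.ext_iff.mp h3 u
    have h6 : r * (Tlin n (gradH (r • w))) u = r ^ 2 * (Tlin n (gradH w)) u := by
      simpa [Tequiv_apply, mul_comm] using h5
    have h7 : (Tlin n (gradH (r • w))) u = r * (Tlin n (gradH w)) u := by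
      have hr0 : r ≠ 0 := ne_of_gt hr
      field_simp at h6 ⊢
      nlinarith [h6]
    rw [map_smul]
    simpa using h7
  -- Euler identity for the gradient
  have hEuler : ∀ w : Cn n, w ≠ 0 → fderiv ℝ gradH w w = gradH w := by
    intro w hw
    have hcurve : HasDerivAt (fun r : ℝ => r • w) w 1 := by
      simpa using (hasDerivAt_id (1 : ℝ)).smul_const w
    have hf' : HasFDerivAt gradH (fderiv ℝ gradH w) ((1 : ℝ) • w) := by
      rw [one_smul]; exact (hgdiff w hw).hasFDerivAt
    have hc1 : HasDerivAt (fun r : ℝ => gradH (r • w)) (fderiv ℝ gradH w w) 1 :=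
      hf'.comp_hasDerivAt 1 hcurve
    have hc2 : HasDerivAt (fun r : ℝ => gradH (r • w)) (gradH w) 1 := by
      have heq : (fun r : ℝ => r • gradH w) =ᶠ[nhds (1 : ℝ)] fun r => gradH (r • w) := by
        filter_upwards [eventually_gt_nhds zero_lt_one] with r hr
        exact (hg_hom r hr w hw).symm
      have hbase : HasDerivAt (fun r : ℝ => r • gradH w) (gradH w) 1 := by
        simpa using (hasDerivAt_id (1 : ℝ)).smul_const (gradH w)
      exact hbase.congr_of_eventuallyEq heq.symm
    exact hc1.unique hc2
  -- Hessian symmetry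
  have hHess : ∀ w : Cn n, w ≠ 0 → ∀ u a : Cn n,
      (inner ℂ (fderiv ℝ gradH w u) a : ℂ).re = (inner ℂ (fderiv ℝ gradH w a) u : ℂ).re := by
    intro w hw u a
    have hev : ∀ᶠ y in nhds w, HasFDerivAt H (Tequiv n (gradH y)) y := by
      filter_upwards [hS.mem_nhds hw] with y hy using hgrad' y hy
    have hx : HasFDerivAt (fun y => (Tequiv n (gradH y) : Cn n →L[ℝ] ℝ))
        (((Tequiv n : Cn n →L[ℝ] (Cn n →L[ℝ] ℝ))).comp (fderiv ℝ gradH w)) w :=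
      ((Tequiv n : Cn n →L[ℝ] (Cn n →L[ℝ] ℝ)).hasFDerivAt).comp w (hgdiff w hw).hasFDerivAt
    exact second_derivative_symmetric_of_eventually hev hx u a
  intro t z hz
  constructor
  · -- the Liouville form is preserved
    intro v
    have hΦdiff : ∀ q ∈ U, DifferentiableAt ℝ Φ q := fun q hq =>
      (hφsm.contDiffAt (hU.mem_nhds hq)).differentiableAt (by simp)
    have hΦ'cd : ∀ q ∈ U, DifferentiableAt ℝ (fderiv ℝ Φ) q := fun q hq =>
      (((hφsm.contDiffAt (hU.mem_nhds hq)).fderiv_right (m := 1) (by exact WithTop.coe_le_coe.mpr le_top))).differentiableAt one_ne_zero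
    have hA10 : ∀ q ∈ U, fderiv ℝ Φ q (1, 0) = Complex.I • gradH (Φ q) := by
      intro q hq
      have hcurve : HasDerivAt (fun s : ℝ => (s, q.2)) ((1 : ℝ), (0 : Cn n)) q.1 :=
        (hasDerivAt_id q.1).prodMk (hasDerivAt_const q.1 q.2)
      have h1 : HasDerivAt (fun s => Φ (s, q.2)) (fderiv ℝ Φ q (1, 0)) q.1 :=
        by have h := (hΦdiff q hq).hasFDerivAt.comp_hasDerivAt q.1 hcurve; exact h
      have hq2 : q.2 ≠ 0 := hq.2
      exact h1.unique (hφode q.1 q.2 hq2)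
    set B : ℝ → Cn n := fun s => fderiv ℝ Φ (s, z) (0, v) with hB_def
    have hBderiv : ∀ s : ℝ, HasDerivAt B
        (Complex.I • fderiv ℝ gradH (φ s z) (B s)) s := by
      intro s
      have hqs : (s, z) ∈ U := hmemU s z hz
      have hws : φ s z ≠ 0 := hφne s z hz
      have hΦ'd := hΦ'cd (s, z) hqs
      have hsymm : ∀ a b : ℝ × Cn n,
          fderiv ℝ (fderiv ℝ Φ) (s, z) a b = fderiv ℝ (fderiv ℝ Φ) (s, z) b a := by
        intro a b
        refine second_derivative_symmetric_of_eventually (f := Φ) ?_ hΦ'd.hasFDerivAt a b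
        filter_upwards [hU.mem_nhds hqs] with q hq using (hΦdiff q hq).hasFDerivAt
      have hcurve : HasDerivAt (fun u : ℝ => (u, z)) ((1 : ℝ), (0 : Cn n)) s :=
        (hasDerivAt_id s).prodMk (hasDerivAt_const s z)
      have h1 : HasDerivAt B
          (fderiv ℝ (fderiv ℝ Φ) (s, z) ((1 : ℝ), (0 : Cn n)) ((0 : ℝ), v)) s := by
        have happ : HasFDerivAt (fun q => fderiv ℝ Φ q ((0 : ℝ), v))
            ((ContinuousLinearMap.apply ℝ (Cn n) (((0 : ℝ), v) : ℝ × Cn n)).comp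
              (fderiv ℝ (fderiv ℝ Φ) (s, z))) (s, z) :=
          ((ContinuousLinearMap.apply ℝ (Cn n) (((0 : ℝ), v) : ℝ × Cn n)).hasFDerivAt).comp
            (s, z) hΦ'd.hasFDerivAt
        have := happ.comp_hasDerivAt s hcurve
        exact this
      rw [hsymm ((1 : ℝ), (0 : Cn n)) ((0 : ℝ), v)] at h1
      have h2 : fderiv ℝ (fderiv ℝ Φ) (s, z) ((0 : ℝ), v) ((1 : ℝ), (0 : Cn n))
          = Complex.I • fderiv ℝ gradH (φ s z) (B s) := by
        have hG : fderiv ℝ (fun q => fderiv ℝ Φ q ((1 : ℝ), (0 : Cn n))) (s, z)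
            = (ContinuousLinearMap.apply ℝ (Cn n) (((1 : ℝ), (0 : Cn n)) : ℝ × Cn n)).comp
              (fderiv ℝ (fderiv ℝ Φ) (s, z)) :=
          (((ContinuousLinearMap.apply ℝ (Cn n) (((1 : ℝ), (0 : Cn n)) : ℝ × Cn n)).hasFDerivAt).comp
            (s, z) hΦ'd.hasFDerivAt).fderiv
        have heq : (fun q => fderiv ℝ Φ q ((1 : ℝ), (0 : Cn n))) =ᶠ[nhds ((s : ℝ), z)]
            (fun q => Complex.I • gradH (Φ q)) := by
          filter_upwards [hU.mem_nhds hqs] with q hq using hA10 q hq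
        have hXdiff : HasFDerivAt (fun q => Complex.I • gradH (Φ q))
            (Complex.I • ((fderiv ℝ gradH (φ s z)).comp (fderiv ℝ Φ (s, z)))) (s, z) := by
          have hgH : HasFDerivAt gradH (fderiv ℝ gradH (φ s z)) (Φ (s, z)) :=
            (hgdiff _ hws).hasFDerivAt
          exact (hgH.comp (s, z) (hΦdiff _ hqs).hasFDerivAt).const_smul Complex.I
        calc fderiv ℝ (fderiv ℝ Φ) (s, z) ((0 : ℝ), v) ((1 : ℝ), (0 : Cn n))
            = fderiv ℝ (fun q => fderiv ℝ Φ q ((1 : ℝ), (0 : Cn n))) (s, z) ((0 : ℝ), v) := by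
              rw [hG]; rfl
          _ = (Complex.I • ((fderiv ℝ gradH (φ s z)).comp (fderiv ℝ Φ (s, z)))) ((0 : ℝ), v) := by
              rw [heq.fderiv_eq, hXdiff.fderiv]
          _ = Complex.I • fderiv ℝ gradH (φ s z) (B s) := rfl
      rw [h2] at h1
      exact h1
    set f : ℝ → ℝ := fun s => (1 / 2) * ((inner ℂ (φ s z) (B s) : ℂ)).im with hf_def
    have hfderiv : ∀ s, HasDerivAt f 0 s := by
      intro s
      have hws : φ s z ≠ 0 := hφne s z hz
      have hinner := HasDerivAt.inner (𝕜 := ℂ) (hφode s z hz) (hBderiv s)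
      have him := (Complex.imCLM.hasFDerivAt.comp_hasDerivAt s hinner).const_mul ((1 : ℝ) / 2)
      have hzero : (1 : ℝ) / 2 * Complex.imCLM
          ((inner ℂ (φ s z) (Complex.I • fderiv ℝ gradH (φ s z) (B s)) : ℂ)
            + (inner ℂ (Complex.I • gradH (φ s z)) (B s) : ℂ)) = 0 := by
        have e1 : (inner ℂ (φ s z) (Complex.I • fderiv ℝ gradH (φ s z) (B s)) : ℂ)
            = Complex.I * inner ℂ (φ s z) (fderiv ℝ gradH (φ s z) (B s)) :=
          inner_smul_right _ _ _
        have e2 : (inner ℂ (Complex.I • gradH (φ s z)) (B s) : ℂ)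
            = (starRingEnd ℂ) Complex.I * inner ℂ (gradH (φ s z)) (B s) :=
          inner_smul_left _ _ _
        have e3 : (inner ℂ (φ s z) (fderiv ℝ gradH (φ s z) (B s)) : ℂ).re
            = (inner ℂ (gradH (φ s z)) (B s) : ℂ).re := by
          have h4 : (inner ℂ (φ s z) (fderiv ℝ gradH (φ s z) (B s)) : ℂ).re
              = (inner ℂ (fderiv ℝ gradH (φ s z) (B s)) (φ s z) : ℂ).re := by
            rw [← Complex.conj_re, inner_conj_symm]
          rw [h4, hHess (φ s z) hws (B s) (φ s z), hEuler (φ s z) hws]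
        simp only [Complex.imCLM_apply, Complex.add_im, e1, e2, Complex.conj_I,
          Complex.mul_im, Complex.I_re, Complex.I_im, Complex.neg_re, Complex.neg_im]
        ring_nf
        nlinarith [e3]
      rw [hzero] at him
      exact him
    have hconst : ∀ s, f s = f 0 := by
      intro s
      have hdiff : Differentiable ℝ f := fun x => (hfderiv x).differentiableAt
      exact is_const_of_deriv_eq_zero hdiff (fun x => (hfderiv x).deriv) s 0
    have hB_eq : ∀ s : ℝ, fderiv ℝ (fun w => φ s w) z v = B s := by
      intro s
      have h1 : HasFDerivAt (fun w => φ s w)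
          ((fderiv ℝ Φ (s, z)).comp (ContinuousLinearMap.inr ℝ ℝ (Cn n))) z :=
        (hΦdiff (s, z) (hmemU s z hz)).hasFDerivAt.comp z (hasFDerivAt_prodMk_right s z)
      rw [h1.fderiv]
      rfl
    have hf0 : f 0 = liouville z v := by
      have hid : fderiv ℝ (fun w => φ 0 w) z = ContinuousLinearMap.id ℝ (Cn n) := by
        have heq : (fun w => φ 0 w) =ᶠ[nhds z] id := by
          filter_upwards [hS.mem_nhds hz] with y hy using hφ0 y hy
        rw [heq.fderiv_eq, fderiv_id]
      have hB0 : B 0 = v := by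
        rw [← hB_eq 0, hid]
        rfl
      have hφ0z : φ 0 z = z := hφ0 z hz
      simp only [hf_def, hB0, hφ0z, liouville]
    have : liouville (φ t z) (B t) = f t := rfl
    rw [hB_eq t, this, hconst t, hf0]
  · -- H is preserved
    have hH' : ∀ s : ℝ, HasDerivAt (fun u => H (φ u z)) 0 s := by
      intro s
      have hws : φ s z ≠ 0 := hφne s z hz
      have hcomp := (hgrad' (φ s z) hws).comp_hasDerivAt s (hφode s z hz)
      have hval : (Tequiv n (gradH (φ s z))) (Complex.I • gradH (φ s z)) = 0 := by
        show (inner ℂ (gradH (φ s z)) (Complex.I • gradH (φ s z)) : ℂ).re = 0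
        rw [inner_smul_right, inner_self_eq_norm_sq_to_K]
        simp [Complex.mul_re, ← Complex.ofReal_pow]
      rw [hval] at hcomp
      exact hcomp
    have hdiff : Differentiable ℝ (fun u => H (φ u z)) := fun x => (hH' x).differentiableAt
    have hconst := is_const_of_deriv_eq_zero hdiff (fun x => (hH' x).deriv) t 0
    rw [hφ0 z hz] at hconst
    exact hconst
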